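/- For r dividing n, the r-regular Ulam sphere of radius 1 centered at the identity multipermutation has size |S(m_e^r, 1)| = 1 + (n−1)(n/r − 1). -/

import Mathlib

/-!
A multipermutation `x` with `ℓ(m_e^r, x) ≥ n - 1` has the same multiset of values as `m_e^r`, so
it is `m_e^r` with one symbol moved: `x = m_e^r ∘ φ(i, j)`. Since
`φ(i', i) * φ(i, j) = φ(i', j)` and a translocation inside a block fixes `m_e^r`, `x` only
depends on the block `b` of `i` and on `j`. Of the `n · (n/r)` pairs `(b, j)`, the `n` with `j`
in block `b` give `m_e^r`; the others give distinct multipermutations, except that each of the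
`n/r - 1` swaps of the two symbols at a block boundary arises twice. Hence
`|S(m_e^r, 1)| = 1 + n (n/r) - n - (n/r - 1)`.
-/

namespace UlamPaper

/-- Underlying function of the translocation `φ(i,j)` (0-indexed). -/
def tf (i j k : ℕ) : ℕ :=
  if i ≤ j then (if k < i ∨ j < k then k else if k = j then i else k + 1)
  else (if k < j ∨ i < k then k else if k = j then i else k - 1)

theorem tf_lt {n i j k : ℕ} (hi : i < n) (hj : j < n) (hk : k < n) : tf i j k < n := by
  unfold tf; split_ifs <;> omega

theorem tf_tf (i j k : ℕ) : tf j i (tf i j k) = k := by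
  unfold tf; split_ifs <;> omega

/-- The translocation `φ(i,j)` as a permutation of `Fin n`: it deletes the entry in
position `i` and reinserts it at position `j`, shifting intermediate entries. -/
def transloc {n : ℕ} (i j : Fin n) : Equiv.Perm (Fin n) where
  toFun k := ⟨tf i.val j.val k.val, tf_lt i.isLt j.isLt k.isLt⟩
  invFun k := ⟨tf j.val i.val k.val, tf_lt j.isLt i.isLt k.isLt⟩
  left_inv k := Fin.ext (tf_tf i.val j.val k.val)
  right_inv k := Fin.ext (tf_tf j.val i.val k.val)

/-- `IsTransloc φ` : `φ` is a translocation. -/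
def IsTransloc {n : ℕ} (φ : Equiv.Perm (Fin n)) : Prop := ∃ i j : Fin n, φ = transloc i j

/-- Length of the longest common subsequence of two `n`-length sequences. -/
noncomputable def lcsLen {n : ℕ} {α : Type*} (u v : Fin n → α) : ℕ :=
  sSup {k | ∃ f g : Fin k → Fin n, StrictMono f ∧ StrictMono g ∧ ∀ p, u (f p) = v (g p)}

/-- The Ulam distance `d(σ,π) = n - ℓ(σ,π)`. -/
noncomputable def ulamDist {n : ℕ} (σ π : Equiv.Perm (Fin n)) : ℕ :=
  n - lcsLen (⇑σ) (⇑π)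

/-- The `r`-regular multipermutation `m_σ^r` (with values in `[1, n/r]`). -/
def mult {n : ℕ} (r : ℕ) (σ : Equiv.Perm (Fin n)) : Fin n → ℕ :=
  fun i => (σ i).val / r + 1

/-- The `r`-regular Ulam distance, expressed as `n - ℓ(m_σ^r, m_π^r)`. -/
noncomputable def multDist {n : ℕ} (r : ℕ) (σ π : Equiv.Perm (Fin n)) : ℕ :=
  n - lcsLen (mult r σ) (mult r π)
/-- The `r`-regular Ulam sphere of radius `t` centered at `m_σ^r`. -/
def multSphere {n : ℕ} (r : ℕ) (σ : Equiv.Perm (Fin n)) (t : ℕ) : Set (Fin n → ℕ) :=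
  {x | ∃ π : Equiv.Perm (Fin n), x = mult r π ∧ multDist r σ π ≤ t}

open Finset

section LongestCommonSubsequence

variable {n : ℕ} {α : Type*}

theorem bddAbove_commonSubseqLengths (u v : Fin n → α) :
    BddAbove
      {k | ∃ f g : Fin k → Fin n, StrictMono f ∧ StrictMono g ∧ ∀ p, u (f p) = v (g p)} :=
  ⟨n, fun _ ⟨f, _, hf, _⟩ => Fin.le_of_injective f hf.injective⟩

theorem lcsLen_le (u v : Fin n → α) : lcsLen u v ≤ n :=
  csSup_le' fun _ ⟨f, _, hf, _⟩ => Fin.le_of_injective f hf.injective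

theorem le_lcsLen {u v : Fin n → α} {k : ℕ} (f g : Fin k → Fin n) (hf : StrictMono f)
    (hg : StrictMono g) (h : ∀ p, u (f p) = v (g p)) : k ≤ lcsLen u v :=
  le_csSup (bddAbove_commonSubseqLengths u v) ⟨f, g, hf, hg, h⟩

theorem exists_of_le_lcsLen {u v : Fin n → α} {k : ℕ} (hk : k ≤ lcsLen u v) :
    ∃ f g : Fin k → Fin n, StrictMono f ∧ StrictMono g ∧ ∀ p, u (f p) = v (g p) := by
  obtain ⟨f, g, hf, hg, h⟩ : lcsLen u v ∈ _ := Nat.sSup_mem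
    ⟨0, Fin.elim0, Fin.elim0, fun p => p.elim0, fun p => p.elim0, fun p => p.elim0⟩
    (bddAbove_commonSubseqLengths u v)
  exact ⟨f ∘ Fin.castLE hk, g ∘ Fin.castLE hk, hf.comp (Fin.strictMono_castLE hk),
    hg.comp (Fin.strictMono_castLE hk), fun p => h _⟩

end LongestCommonSubsequence

theorem exists_eq_succAbove_of_strictMono {m : ℕ} {f : Fin m → Fin (m + 1)}
    (hf : StrictMono f) : ∃ p : Fin (m + 1), f = p.succAbove := by
  obtain ⟨p, hp⟩ : ∃ p, p ∉ Set.range f := by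
    by_contra! h
    simpa using Fintype.card_le_of_surjective f fun p => h p
  refine ⟨p, (hf.range_inj (Fin.strictMono_succAbove p)).1 ?_⟩
  refine Set.eq_of_subset_of_ncard_le ?_ ?_ (Set.toFinite _)
  · rw [Fin.range_succAbove]
    rintro _ ⟨k, rfl⟩ hk
    exact hp ⟨k, hk⟩
  · rw [Set.ncard_range_of_injective hf.injective,
      Set.ncard_range_of_injective Fin.succAbove_right_injective]

theorem eq_of_map_univ_eq_of_comp_succAbove_eq {m : ℕ} {α : Type*} {x y : Fin (m + 1) → α}
    (j : Fin (m + 1)) (hmap : univ.val.map x = univ.val.map y)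
    (hj : x ∘ j.succAbove = y ∘ j.succAbove) : x = y := by
  have hcons (z : Fin (m + 1) → α) :
      univ.val.map z = z j ::ₘ univ.val.map (z ∘ j.succAbove) := by
    rw [Fin.univ_succAbove m j, cons_val, Multiset.map_cons, map_val, Multiset.map_map]
    rfl
  rw [hcons x, hcons y, hj, Multiset.cons_inj_left] at hmap
  funext k
  rcases Fin.eq_self_or_eq_succAbove j k with rfl | ⟨p, rfl⟩
  · exact hmap
  · exact congrFun hj p

section Translocation

theorem tf_right (i j : ℕ) : tf i j j = i := by
  unfold tf; split_ifs <;> omega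

theorem tf_self (i k : ℕ) : tf i i k = k := by
  unfold tf; split_ifs <;> omega

theorem tf_trans (i' i j k : ℕ) : tf i' i (tf i j k) = tf i' j k := by
  unfold tf; split_ifs <;> omega

theorem tf_succ_comm (j k : ℕ) : tf (j + 1) j k = tf j (j + 1) k := by
  unfold tf; split_ifs <;> omega

theorem tf_eq_or_eq_succ_of_lt {i j k : ℕ} (hk : k < j) :
    tf i j k = k ∨ tf i j k = k + 1 := by
  unfold tf; split_ifs <;> omega

theorem tf_div_of_div_eq {r i j : ℕ} (h : i / r = j / r) (k : ℕ) : tf i j k / r = k / r := by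
  have hblock {x : ℕ} (h₁ : min i j ≤ x) (h₂ : x ≤ max i j) : x / r = i / r := by
    have := Nat.div_le_div_right (c := r) h₁
    have := Nat.div_le_div_right (c := r) h₂
    rcases le_total i j with hij | hij <;>
      simp only [hij, min_eq_left, min_eq_right, max_eq_left, max_eq_right] at * <;> omega
  unfold tf
  split_ifs <;>
    first | rfl | exact (hblock (by omega) (by omega)).trans (hblock (by omega) (by omega)).symm

theorem succ_eq_mul_of_tf_div_ne {r i j k : ℕ} (hk : k < j) (h : tf i j k / r ≠ k / r) :
    k + 1 = r * (tf i j k / r) := by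
  rcases tf_eq_or_eq_succ_of_lt (i := i) hk with hk' | hk' <;> rw [hk'] at h ⊢
  · exact absurd rfl h
  · have hdvd : r ∣ k + 1 := by
      by_contra hndvd
      simp [Nat.succ_div, hndvd] at h
    exact (Nat.mul_div_cancel' hdvd).symm

variable {n : ℕ}

theorem transloc_self (i : Fin n) : transloc i i = 1 :=
  Equiv.ext fun k => Fin.ext (tf_self i k)

theorem transloc_mul_transloc (i' i j : Fin n) : transloc i' i * transloc i j = transloc i' j :=
  Equiv.ext fun k => Fin.ext (tf_trans i' i j k)

theorem transloc_comm_of_succ {i j : Fin n} (h : j.val + 1 = i.val) :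
    transloc i j = transloc j i :=
  Equiv.ext fun k => Fin.ext <| by
    change tf i j k = tf j i k
    rw [← h]
    exact tf_succ_comm j k

theorem transloc_succAbove {m : ℕ} (i j : Fin (m + 1)) (p : Fin m) :
    transloc i j (j.succAbove p) = i.succAbove p := by
  apply Fin.ext
  change tf i j (j.succAbove p) = (i.succAbove p : ℕ)
  simp only [Fin.succAbove, Fin.lt_def, Fin.val_castSucc]
  split_ifs <;> simp only [Fin.val_castSucc, Fin.val_succ] <;> unfold tf <;> split_ifs <;> omega

end Translocation

theorem le_lcsLen_comp_transloc {m : ℕ} {α : Type*} (u : Fin (m + 1) → α)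
    (i j : Fin (m + 1)) : m ≤ lcsLen u (u ∘ transloc i j) :=
  le_lcsLen i.succAbove j.succAbove (Fin.strictMono_succAbove i) (Fin.strictMono_succAbove j)
    fun p => by rw [Function.comp_apply, transloc_succAbove]

theorem exists_transloc_of_le_lcsLen {m : ℕ} {α : Type*} {u v : Fin (m + 1) → α}
    (hmap : univ.val.map v = univ.val.map u) (h : m ≤ lcsLen u v) :
    ∃ i j, v = u ∘ transloc i j := by
  obtain ⟨f, g, hf, hg, hfg⟩ := exists_of_le_lcsLen h
  obtain ⟨i, rfl⟩ := exists_eq_succAbove_of_strictMono hf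
  obtain ⟨j, rfl⟩ := exists_eq_succAbove_of_strictMono hg
  refine ⟨i, j, eq_of_map_univ_eq_of_comp_succAbove_eq j ?_ ?_⟩
  · rw [hmap, ← Multiset.map_map, Multiset.map_univ_val_equiv]
  · funext p
    simp [transloc_succAbove, hfg]

section Mult

variable {n r : ℕ}

theorem mult_mul (σ τ : Equiv.Perm (Fin n)) : mult r (σ * τ) = mult r σ ∘ τ := rfl

theorem map_univ_mult (σ : Equiv.Perm (Fin n)) :
    univ.val.map (mult r σ) = univ.val.map (mult r (1 : Equiv.Perm (Fin n))) := by
  rw [← one_mul σ, mult_mul, ← Multiset.map_map, Multiset.map_univ_val_equiv]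

theorem multSphere_one_eq_range {m : ℕ} (σ : Equiv.Perm (Fin (m + 1))) :
    multSphere r σ 1 =
      Set.range fun p : Fin (m + 1) × Fin (m + 1) => mult r (σ * transloc p.1 p.2) := by
  ext x
  constructor
  · rintro ⟨π, rfl, hπ⟩
    have hlcs : m ≤ lcsLen (mult r σ) (mult r π) := by
      have := lcsLen_le (mult r σ) (mult r π)
      unfold multDist at hπ
      omega
    obtain ⟨i, j, h⟩ :=
      exists_transloc_of_le_lcsLen ((map_univ_mult π).trans (map_univ_mult σ).symm) hlcs
    exact ⟨(i, j), h.symm⟩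
  · rintro ⟨⟨i, j⟩, rfl⟩
    refine ⟨σ * transloc i j, rfl, ?_⟩
    have : m ≤ lcsLen (mult r σ) (mult r (σ * transloc i j)) := le_lcsLen_comp_transloc _ i j
    unfold multDist
    omega

theorem mult_transloc_of_div_eq {i j : Fin n} (h : i.val / r = j.val / r) :
    mult r (transloc i j) = mult r 1 :=
  funext fun k => congrArg (· + 1) (tf_div_of_div_eq h k)

theorem mult_transloc_congr_left {i i' : Fin n} (h : i.val / r = i'.val / r) (j : Fin n) :
    mult r (transloc i j) = mult r (transloc i' j) := by
  rw [← transloc_mul_transloc i' i j, mult_mul, mult_transloc_of_div_eq h.symm]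
  rfl

end Mult

section Counting

variable {n r : ℕ}

/-- `(b, j)` encodes moving a symbol `b + 1` of `m_e^r` to position `j` (see `moveBlock`).
Pairs with `j` in block `b`, which give `m_e^r`, are dropped; the swap of positions `r * b - 1`
and `r * b` is both `(b, r * b - 1)` and `(b - 1, r * b)`, and only the latter is kept. -/
def movePairs (n r : ℕ) : Finset (ℕ × ℕ) :=
  (range (n / r) ×ˢ range n).filter fun p => p.1 ≠ p.2 / r ∧ p.2 + 1 ≠ r * p.1

def moveBlock (n r : ℕ) (p : ℕ × ℕ) : Fin n → ℕ := fun k => tf (r * p.1) p.2 k / r + 1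

theorem mem_movePairs {b j : ℕ} :
    (b, j) ∈ movePairs n r ↔ b < n / r ∧ j < n ∧ b ≠ j / r ∧ j + 1 ≠ r * b := by
  simp [movePairs, and_assoc]

theorem moveBlock_eq_mult_transloc (hdvd : r ∣ n) {b j : ℕ} (hb : b < n / r) (hj : j < n) :
    moveBlock n r (b, j) =
      mult r (transloc ⟨r * b, (Nat.lt_div_iff_mul_lt' hdvd b).1 hb⟩ ⟨j, hj⟩) :=
  rfl

theorem moveBlock_apply_self (hr : 0 < r) {b j : ℕ} (hj : j < n) :
    moveBlock n r (b, j) ⟨j, hj⟩ = b + 1 := by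
  simp [moveBlock, tf_right, Nat.mul_div_cancel_left _ hr]

theorem mult_transloc_mem (hr : 0 < r) (hdvd : r ∣ n) (i j : Fin n) :
    mult r (transloc i j) ∈ insert (mult r 1) (moveBlock n r '' movePairs n r) := by
  obtain ⟨b, hib⟩ : ∃ b, i.val / r = b := ⟨_, rfl⟩
  rcases eq_or_ne b (j.val / r) with hij | hij
  · exact Or.inl (mult_transloc_of_div_eq (hib.trans hij))
  have hb : b < n / r := hib ▸ Nat.div_lt_div_of_lt_of_dvd hdvd i.isLt
  have hbr : r * b / r = b := Nat.mul_div_cancel_left b hr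
  have hcanon : mult r (transloc i j) = moveBlock n r (b, j) := by
    rw [moveBlock_eq_mult_transloc hdvd hb j.isLt]
    exact mult_transloc_congr_left (hib.trans hbr.symm) j
  refine Or.inr ?_
  by_cases hswap : j.val + 1 = r * b
  -- `φ(r * b, j)` is then the transposition of `j` and `j + 1`, which is also `φ(j, r * b)`.
  · obtain ⟨c, hjc⟩ : ∃ c, j.val / r = c := ⟨_, rfl⟩
    obtain rfl : b = c + 1 := by
      have := Nat.succ_div (a := j.val) (b := r)
      rw [if_pos ⟨b, hswap⟩, hswap, hbr, hjc] at this
      exact this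
    have hrb : r * (c + 1) < n := (Nat.lt_div_iff_mul_lt' hdvd _).1 hb
    refine ⟨(c, r * (c + 1)), mem_movePairs.2 ⟨by omega, hrb, by omega, ?_⟩, ?_⟩
    · have := Nat.mul_le_mul_left r (Nat.le_add_right c 1)
      omega
    rw [hcanon, moveBlock_eq_mult_transloc hdvd (b := c) (by omega) hrb,
      moveBlock_eq_mult_transloc hdvd hb j.isLt,
      mult_transloc_congr_left (i' := j) (by rw [Nat.mul_div_cancel_left _ hr, hjc]),
      transloc_comm_of_succ (i := ⟨_, hrb⟩) hswap]
  · exact ⟨(b, j), mem_movePairs.2 ⟨hb, j.isLt, hij, hswap⟩, hcanon.symm⟩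

theorem mult_one_notMem_image (hr : 0 < r) : mult r 1 ∉ moveBlock n r '' movePairs n r := by
  rintro ⟨⟨b, j⟩, hp, he⟩
  obtain ⟨-, hj, hbj, -⟩ := mem_movePairs.1 hp
  have := congrFun he ⟨j, hj⟩
  rw [moveBlock_apply_self hr] at this
  exact hbj (Nat.succ_injective this)

theorem injOn_moveBlock (hr : 0 < r) : Set.InjOn (moveBlock n r) (movePairs n r) := by
  -- Left of `j`, moving a symbol to `j` can only raise a block value where `j' + 1` is a block
  -- boundary, which is exactly the excluded swap.
  have hnotlt {b j b' j' : ℕ} (hp' : (b', j') ∈ movePairs n r)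
      (he : moveBlock n r (b, j) = moveBlock n r (b', j')) : ¬ j' < j := by
    intro hlt
    obtain ⟨-, hj', hbj', hswap'⟩ := mem_movePairs.1 hp'
    have hval := congrFun he ⟨j', hj'⟩
    rw [moveBlock_apply_self hr] at hval
    have hval : tf (r * b) j j' / r = b' := Nat.succ_injective hval
    exact hswap' (hval ▸ succ_eq_mul_of_tf_div_ne hlt (hval ▸ hbj'))
  rintro ⟨b, j⟩ hp ⟨b', j'⟩ hp' he
  obtain rfl : j = j' := le_antisymm (not_lt.1 (hnotlt hp' he)) (not_lt.1 (hnotlt hp he.symm))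
  have hval := congrFun he ⟨j, (mem_movePairs.1 hp).2.1⟩
  rw [moveBlock_apply_self hr, moveBlock_apply_self hr] at hval
  rw [Nat.succ_injective hval]

theorem movePairs_eq_sdiff (hr : 0 < r) :
    movePairs n r = (range (n / r) ×ˢ range n) \
      ((range n).image (fun j => (j / r, j)) ∪
        (Ico 1 (n / r)).image fun b => (b, r * b - 1)) := by
  ext ⟨b, j⟩
  have hpos : 0 < r * b ↔ 0 < b := Nat.mul_pos_iff_of_pos_left hr
  simp only [movePairs, mem_filter, mem_sdiff, mem_union, mem_product, mem_range, mem_image,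
    mem_Ico, Prod.mk.injEq]
  constructor
  · rintro ⟨⟨hb, hj⟩, hbj, hswap⟩
    refine ⟨⟨hb, hj⟩, ?_⟩
    rintro (⟨j', -, rfl, rfl⟩ | ⟨b', ⟨hb', -⟩, rfl, rfl⟩) <;> omega
  · rintro ⟨⟨hb, hj⟩, hnot⟩
    refine ⟨⟨hb, hj⟩, fun h => hnot (Or.inl ⟨j, hj, h.symm, rfl⟩), fun h => ?_⟩
    exact hnot (Or.inr ⟨b, ⟨by omega, hb⟩, rfl, by omega⟩)

theorem card_movePairs (hdvd : r ∣ n) : (movePairs n r).card = (n - 1) * (n / r - 1) := by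
  rcases Nat.eq_zero_or_pos r with rfl | hr
  · obtain rfl : n = 0 := Nat.eq_zero_of_zero_dvd hdvd
    rfl
  obtain ⟨q, hq⟩ : ∃ q, n / r = q := ⟨_, rfl⟩
  have hsub : (range n).image (fun j => (j / r, j)) ∪ (Ico 1 q).image (fun b => (b, r * b - 1))
      ⊆ range q ×ˢ range n := by
    simp only [union_subset_iff, image_subset_iff, mem_product, mem_range, mem_Ico]
    refine ⟨fun j hj => ⟨hq ▸ Nat.div_lt_div_of_lt_of_dvd hdvd hj, hj⟩,
      fun b hb => ⟨hb.2, ?_⟩⟩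
    have := (Nat.lt_div_iff_mul_lt' hdvd b).1 (hq ▸ hb.2)
    omega
  have hdisj : Disjoint ((range n).image fun j => (j / r, j))
      ((Ico 1 q).image fun b => (b, r * b - 1)) := by
    simp only [disjoint_left, mem_image, mem_range, mem_Ico]
    rintro _ ⟨j, -, rfl⟩ ⟨b, ⟨hb, -⟩, hbj⟩
    obtain ⟨rfl, hj⟩ := Prod.mk.inj hbj
    have hle : r * (j / r) ≤ j := Nat.mul_div_le j r
    have := Nat.mul_pos hr hb
    omega
  rw [movePairs_eq_sdiff hr, hq, card_sdiff_of_subset hsub, card_union_of_disjoint hdisj,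
    card_product, card_image_of_injective _ fun _ _ h => congrArg Prod.snd h,
    card_image_of_injective _ fun _ _ h => congrArg Prod.fst h, card_range, card_range,
    Nat.card_Ico]
  rcases q with _ | q
  · simp
  obtain ⟨m, rfl⟩ : ∃ m, n = m + 1 := Nat.exists_eq_add_one.2 <| Nat.pos_of_ne_zero <| by
    rintro rfl
    simp at hq
  have : (q + 1) * (m + 1) = m * q + (m + 1 + q) := by ring
  simp only [Nat.add_sub_cancel]
  omega

end Counting

theorem multSphere_identity_one_eq {m r : ℕ} (hr : 0 < r) (hdvd : r ∣ m + 1) :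
    multSphere r (1 : Equiv.Perm (Fin (m + 1))) 1 =
      insert (mult r 1) (moveBlock (m + 1) r '' movePairs (m + 1) r) := by
  rw [multSphere_one_eq_range]
  apply Set.Subset.antisymm
  · rintro _ ⟨⟨i, j⟩, rfl⟩
    simpa only [one_mul] using mult_transloc_mem hr hdvd i j
  · rintro _ (rfl | ⟨⟨b, j⟩, hp, rfl⟩)
    · exact ⟨(0, 0), by simp only [transloc_self, mul_one]⟩
    · obtain ⟨hb, hj, -⟩ := mem_movePairs.1 hp
      rw [moveBlock_eq_mult_transloc hdvd hb hj]
      exact ⟨(_, _), congrArg (mult r) (one_mul _)⟩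

theorem multSphere_identity_one_card_general {n r : ℕ} (hdvd : r ∣ n) :
    (multSphere r (1 : Equiv.Perm (Fin n)) 1).ncard = 1 + (n - 1) * (n / r - 1) := by
  obtain _ | m := n
  · have hsphere : multSphere r (1 : Equiv.Perm (Fin 0)) 1 = {mult r 1} :=
      Set.eq_singleton_iff_unique_mem.2
        ⟨⟨1, rfl, (Nat.sub_le _ _).trans zero_le_one⟩, fun _ _ => Subsingleton.elim _ _⟩
    simp [hsphere]
  have hr : 0 < r := Nat.pos_of_dvd_of_pos hdvd m.succ_pos
  rw [multSphere_identity_one_eq hr hdvd,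
    Set.ncard_insert_of_notMem (mult_one_notMem_image hr) (Set.toFinite _),
    (injOn_moveBlock hr).ncard_image, Set.ncard_coe_finset, card_movePairs hdvd, add_comm]

/-- `|S(m_e^r, 1)| = 1 + (n−1)(n/r − 1)`. -/
theorem multSphere_identity_one_card {n r : ℕ} (hr : 0 < r) (hdvd : r ∣ n) :
    (multSphere r (1 : Equiv.Perm (Fin n)) 1).ncard = 1 + (n - 1) * (n / r - 1) :=
  multSphere_identity_one_card_general hdvd

end UlamPaper
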